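/- arXiv:2604.00840 — 3 statements merged into one kernel-verified Lean document; each statement's English description precedes it below -/
import Mathlib

section
/- Let f : ℝ^m → ℝ be C² satisfying (A1) (L_f-Lipschitz gradient) and (A2) (⟨∇f(x),x⟩ ≥ m_f‖x‖² - c for ‖x‖ ≥ R). Define A(x) := Diag(∇f(x)) · H_f(x) where H_f is the Hessian. Then the set D_A† := {x ∈ ℝ^m : det A(x) = 0} is not all of ℝ^m; that is, there exists x ∈ ℝ^m with det(Diag(∇f(x)) H_f(x)) ≠ 0. -/
/-!
Because `⟪∇f x, x⟫` grows like `‖x‖²`, for every `y` the function `f - ⟪y, ·⟫` attains its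
minimum over a large closed ball at an interior point, so `∇f` is surjective. By Sard's theorem
the image under `∇f` of the points where `det H_f = 0` is Lebesgue-null, and so is the union of
the coordinate hyperplanes. Any `y = ∇f x` outside both sets gives
`det (Diag (∇f x) H_f x) = (∏ i, y i) * det (H_f x) ≠ 0`.
-/

open MeasureTheory InnerProductSpace

theorem exists_fderiv_eq_zero_of_pos_on_sphere {E : Type*} [NormedAddCommGroup E]
    [NormedSpace ℝ E] [ProperSpace E] {g : E → ℝ} (hg : Differentiable ℝ g) {r : ℝ}
    (hr : 0 ≤ r) (hpos : ∀ x, ‖x‖ = r → 0 < fderiv ℝ g x x) : ∃ x, fderiv ℝ g x = 0 := by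
  obtain ⟨x, hx, hmin⟩ := (isCompact_closedBall (0 : E) r).exists_isMinOn
    (Metric.nonempty_closedBall.2 hr) hg.continuous.continuousOn
  rcases (mem_closedBall_zero_iff.1 hx).lt_or_eq with hlt | heq
  · exact ⟨x, (hmin.isLocalMin <| Metric.closedBall_mem_nhds_of_mem <|
      mem_ball_zero_iff.2 hlt).fderiv_eq_zero⟩
  · -- On the sphere, moving towards the origin would decrease `g`.
    have hinward : -x ∈ posTangentConeAt (Metric.closedBall 0 r) x :=
      mem_posTangentConeAt_of_segment_subset <|
        (convex_closedBall 0 r).segment_subset hx (by simpa using hr)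
    have := hmin.localize.hasFDerivWithinAt_nonneg (hg x).hasFDerivAt.hasFDerivWithinAt hinward
    linarith [hpos x heq, map_neg (fderiv ℝ g x) x]

theorem gradient_surjective_of_inner_gradient_ge {E : Type*} [NormedAddCommGroup E]
    [InnerProductSpace ℝ E] [FiniteDimensional ℝ E] {f : E → ℝ} (hf : Differentiable ℝ f)
    {a c R : ℝ} (ha : 0 < a) (hcoer : ∀ x, R ≤ ‖x‖ → a * ‖x‖ ^ 2 - c ≤ ⟪gradient f x, x⟫_ℝ) :
    Function.Surjective (gradient f) := by
  intro y
  set g : E → ℝ := fun x => f x - ⟪y, x⟫_ℝ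
  have hg : ∀ x, HasFDerivAt g (fderiv ℝ f x - innerSL ℝ y) x := fun x =>
    (hf x).hasFDerivAt.sub (innerSL ℝ y).hasFDerivAt
  obtain ⟨r, hRr, hr, hrad⟩ : ∃ r, R ≤ r ∧ 0 ≤ r ∧ c + ‖y‖ * r < a * r ^ 2 := by
    set q := (|c| + ‖y‖) / a
    have hq : a * q = |c| + ‖y‖ := mul_div_cancel₀ _ ha.ne'
    have hq0 : 0 ≤ q := by positivity
    have hs := le_max_right R 0
    refine ⟨max R 0 + q + 1, by linarith [le_max_left R 0], by linarith, ?_⟩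
    -- `a r² ≥ a r (q + 1) = (|c| + ‖y‖) r + a r` and `r ≥ 1`
    nlinarith [le_abs_self c, mul_nonneg (abs_nonneg c) (add_nonneg hs hq0),
      mul_nonneg (mul_nonneg ha.le (by linarith : 0 ≤ max R 0 + q + 1)) hs]
  obtain ⟨x, hx⟩ := exists_fderiv_eq_zero_of_pos_on_sphere (fun x => (hg x).differentiableAt) hr
    fun x hx => by
      have hfx := hcoer x (hx ▸ hRr)
      rw [(hg x).fderiv, sub_apply, innerSL_apply_apply, ← inner_gradient_left]
      rw [hx] at hfx
      linarith [hx ▸ real_inner_le_norm y x]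
  refine ⟨x, ext_inner_right ℝ fun v => ?_⟩
  rw [(hg x).fderiv, sub_eq_zero] at hx
  rw [inner_gradient_left, hx, innerSL_apply_apply]

theorem hasFDerivAt_gradient {E : Type*} [NormedAddCommGroup E] [InnerProductSpace ℝ E]
    [CompleteSpace E] {f : E → ℝ} {x : E} (hf : DifferentiableAt ℝ (fderiv ℝ f) x) :
    HasFDerivAt (gradient f)
      (((toDual ℝ E).symm.toContinuousLinearEquiv : StrongDual ℝ E ≃L[ℝ] E)
        |>.toContinuousLinearMap.comp (fderiv ℝ (fderiv ℝ f) x)) x :=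
  ((toDual ℝ E).symm.toContinuousLinearEquiv : StrongDual ℝ E ≃L[ℝ] E).hasFDerivAt.comp x
    hf.hasFDerivAt

section Euclidean

variable {ι : Type*} [Fintype ι] [DecidableEq ι]

noncomputable def hessianMatrix (f : EuclideanSpace ℝ ι → ℝ) (x : EuclideanSpace ℝ ι) :
    Matrix ι ι ℝ :=
  Matrix.of fun i j =>
    fderiv ℝ (fun z => fderiv ℝ f z (EuclideanSpace.single j 1)) x (EuclideanSpace.single i 1)

theorem EuclideanSpace.toDual_symm_apply (φ : StrongDual ℝ (EuclideanSpace ℝ ι)) (i : ι) :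
    (toDual ℝ (EuclideanSpace ℝ ι)).symm φ i = φ (EuclideanSpace.single i 1) := by
  simp [← InnerProductSpace.toDual_symm_apply, EuclideanSpace.inner_single_right]

theorem hessianMatrix_apply {f : EuclideanSpace ℝ ι → ℝ} {x : EuclideanSpace ℝ ι}
    (hf : DifferentiableAt ℝ (fderiv ℝ f) x) (i j : ι) :
    hessianMatrix f x i j =
      fderiv ℝ (fderiv ℝ f) x (EuclideanSpace.single i 1) (EuclideanSpace.single j 1) := by
  simp [hessianMatrix, fderiv_clm_apply hf (differentiableAt_const _)]

theorem det_fderiv_gradient {f : EuclideanSpace ℝ ι → ℝ} {x : EuclideanSpace ℝ ι}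
    (hf : DifferentiableAt ℝ (fderiv ℝ f) x) :
    (fderiv ℝ (gradient f) x).det = (hessianMatrix f x).det := by
  rw [(hasFDerivAt_gradient hf).fderiv, ContinuousLinearMap.det,
    ← LinearMap.det_toMatrix (EuclideanSpace.basisFun ι ℝ).toBasis, ← Matrix.det_transpose]
  congr 1
  ext i j
  simp [LinearMap.toMatrix_apply, hessianMatrix_apply hf, EuclideanSpace.toDual_symm_apply]

theorem det_diag_gradient_mul_hessianMatrix (f : EuclideanSpace ℝ ι → ℝ)
    (x : EuclideanSpace ℝ ι) :
    (Matrix.of fun i j => fderiv ℝ f x (EuclideanSpace.single i 1) *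
        fderiv ℝ (fun z => fderiv ℝ f z (EuclideanSpace.single j 1)) x
          (EuclideanSpace.single i 1)).det =
      (∏ i, gradient f x i) * (hessianMatrix f x).det := by
  rw [← Matrix.det_diagonal, ← Matrix.det_mul]
  congr 1
  ext i j
  simp [Matrix.diagonal_mul, hessianMatrix, gradient, EuclideanSpace.toDual_symm_apply]

theorem addHaar_image_gradient_hessianMatrix_det_eq_zero {f : EuclideanSpace ℝ ι → ℝ}
    (hf : Differentiable ℝ (fderiv ℝ f)) :
    volume (gradient f '' {x | (hessianMatrix f x).det = 0}) = 0 :=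
  addHaar_image_eq_zero_of_det_fderivWithin_eq_zero volume
    (fun x _ => (hasFDerivAt_gradient (hf x)).differentiableAt.hasFDerivAt.hasFDerivWithinAt)
    fun x hx => (det_fderiv_gradient (hf x)).trans hx

theorem ae_forall_apply_ne_zero : ∀ᵐ y : EuclideanSpace ℝ ι, ∀ i, y i ≠ 0 := by
  refine ae_all_iff.2 fun i => ?_
  have hker : LinearMap.ker
      ((EuclideanSpace.proj i : StrongDual ℝ _) : EuclideanSpace ℝ ι →ₗ[ℝ] ℝ) ≠ ⊤ := by
    rw [Ne, LinearMap.ker_eq_top]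
    intro h
    simpa using LinearMap.congr_fun h (EuclideanSpace.single i 1)
  filter_upwards [measure_eq_zero_iff_ae_notMem.1 (Measure.addHaar_submodule volume _ hker)]
    with y hy
  simpa using hy

end Euclidean

theorem stmt9_general {m : ℕ} (f : EuclideanSpace ℝ (Fin m) → ℝ) (hf : ContDiff ℝ 2 f)
    (mf c R : ℝ) (hmf : 0 < mf)
    (hA2 : ∀ x : EuclideanSpace ℝ (Fin m), R ≤ ‖x‖ →
      mf * ‖x‖^2 - c ≤ (inner ℝ (gradient f x) x : ℝ)) :
    ∃ x : EuclideanSpace ℝ (Fin m),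
      (Matrix.of fun i j : Fin m =>
        (fderiv ℝ f x (EuclideanSpace.single i 1)) *
          (fderiv ℝ (fun z => fderiv ℝ f z (EuclideanSpace.single j 1)) x
            (EuclideanSpace.single i 1))).det ≠ 0 := by
  have hf' : Differentiable ℝ (fderiv ℝ f) :=
    (hf.fderiv_right (m := 1) (by norm_num)).differentiable one_ne_zero
  obtain ⟨y, hy_regular, hy_coord⟩ : ∃ y, y ∉ gradient f '' {x | (hessianMatrix f x).det = 0} ∧
      ∀ i, y i ≠ 0 :=
    ((measure_eq_zero_iff_ae_notMem.1 (addHaar_image_gradient_hessianMatrix_det_eq_zero hf')).and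
      ae_forall_apply_ne_zero).exists
  obtain ⟨x, rfl⟩ := gradient_surjective_of_inner_gradient_ge
    (hf.differentiable (by norm_num)) hmf hA2 y
  refine ⟨x, ?_⟩
  rw [det_diag_gradient_mul_hessianMatrix]
  exact mul_ne_zero (Finset.prod_ne_zero_iff.2 fun i _ => hy_coord i)
    fun h => hy_regular ⟨x, h, rfl⟩

/-- Under (A1) and (A2), the degeneracy set
`D_A† = {x : det(Diag(∇f(x)) H_f(x)) = 0}` is not all of `ℝ^m`:
there exists a point where the matrix `A(x)_{ij} = ∂_i f(x) · ∂_i∂_j f(x)`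
is invertible. -/
theorem stmt9 {m : ℕ} (f : EuclideanSpace ℝ (Fin m) → ℝ) (hf : ContDiff ℝ 2 f)
    (Lf mf c R : ℝ) (hLf : 0 < Lf) (hmf : 0 < mf) (hc : 0 ≤ c) (hR : 0 < R)
    (hA1 : ∀ x y : EuclideanSpace ℝ (Fin m),
      ‖gradient f x - gradient f y‖ ≤ Lf * ‖x - y‖)
    (hA2 : ∀ x : EuclideanSpace ℝ (Fin m), R ≤ ‖x‖ →
      mf * ‖x‖^2 - c ≤ (inner ℝ (gradient f x) x : ℝ)) :
    ∃ x : EuclideanSpace ℝ (Fin m),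
      (Matrix.of fun i j : Fin m =>
        (fderiv ℝ f x (EuclideanSpace.single i 1)) *
          (fderiv ℝ (fun z => fderiv ℝ f z (EuclideanSpace.single j 1)) x
            (EuclideanSpace.single i 1))).det ≠ 0 :=
  stmt9_general f hf mf c R hmf hA2
end

section
/- Let μ, ν be probability measures on ℝ^d with finite second moments. Then for every R > 0, W₂(μ,ν)² ≤ 8 R² ‖μ - ν‖_{TV} + 4 ∫_{‖u‖>R} ‖u‖² dμ(u) + 4 ∫_{‖v‖>R} ‖v‖² dν(v), where W₂ is the 2-Wasserstein distance and ‖·‖_{TV} the total variation distance. -/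
open MeasureTheory

/-- Total variation distance: supremum over measurable sets of the difference
of the measures. -/
noncomputable def tvDist {α : Type*} [MeasurableSpace α]
    (μ ν : Measure α) : ℝ :=
  ⨆ A : {s : Set α // MeasurableSet s}, |(μ A).toReal - (ν A).toReal|

/-- Squared 2-Wasserstein distance, as infimum over couplings of the expected
squared distance. -/
noncomputable def W2sq {d : ℕ}
    (μ ν : Measure (EuclideanSpace ℝ (Fin d))) : ℝ :=
  sInf {r : ℝ |
    ∃ π : Measure (EuclideanSpace ℝ (Fin d) × EuclideanSpace ℝ (Fin d)),
      π.map Prod.fst = μ ∧ π.map Prod.snd = ν ∧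
      r = ∫ p, ‖p.1 - p.2‖^2 ∂π}

open Set

/-!
Take the maximal coupling. A Hahn decomposition writes `μ = c + ρ₁` and `ν = c + ρ₂`, where the
excess parts `ρ₁ ≤ μ` and `ρ₂ ≤ ν` have a common mass `β ≤ ‖μ - ν‖_TV`. Keep `c` on the diagonal,
where the cost vanishes, and couple `ρ₁` with `ρ₂` independently, normalised by `β`. By
`‖u - v‖² ≤ 2‖u‖² + 2‖v‖²` the cost of this coupling is at most `2∫‖u‖² dρ₁ + 2∫‖v‖² dρ₂`, and
splitting `∫‖u‖² dρ₁` at `‖u‖ = R` bounds it by `R²β` plus the tail of `μ` beyond `R`.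
-/

section TotalVariation

variable {α : Type*} [MeasurableSpace α] {μ ν : Measure α} [IsFiniteMeasure μ] [IsFiniteMeasure ν]

lemma abs_sub_le_tvDist {s : Set α} (hs : MeasurableSet s) :
    |μ.real s - ν.real s| ≤ tvDist μ ν := by
  refine le_ciSup (f := fun A : {s : Set α // MeasurableSet s} => |μ.real A - ν.real A|)
    ⟨μ.real univ + ν.real univ, ?_⟩ ⟨s, hs⟩
  rintro _ ⟨A, rfl⟩
  rw [abs_sub_le_iff]
  constructor <;>
    linarith [measureReal_mono (μ := μ) (subset_univ A.1), measureReal_nonneg (μ := μ) (s := A.1),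
      measureReal_mono (μ := ν) (subset_univ A.1), measureReal_nonneg (μ := ν) (s := A.1)]

theorem exists_eq_add_eq_add_real_le_tvDist (h : μ univ = ν univ) :
    ∃ c ρ₁ ρ₂ : Measure α, μ = c + ρ₁ ∧ ν = c + ρ₂ ∧ ρ₁ univ = ρ₂ univ ∧
      ρ₁.real univ ≤ tvDist μ ν := by
  obtain ⟨s, hs, hνμ, hμν⟩ := hahn_decomposition μ ν
  have hle_s : ν.restrict s ≤ μ.restrict s := Measure.le_iff.2 fun t ht => by
    simpa only [Measure.restrict_apply ht] using hνμ _ (ht.inter hs) inter_subset_right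
  have hle_sc : μ.restrict sᶜ ≤ ν.restrict sᶜ := Measure.le_iff.2 fun t ht => by
    simpa only [Measure.restrict_apply ht] using hμν _ (ht.inter hs.compl) inter_subset_right
  have hμ : μ = ν.restrict s + μ.restrict sᶜ + (μ.restrict s - ν.restrict s) := by
    conv_lhs => rw [← Measure.restrict_add_restrict_compl (μ := μ) hs,
      ← Measure.sub_add_cancel_of_le hle_s]
    ac_rfl
  have hν : ν = ν.restrict s + μ.restrict sᶜ + (ν.restrict sᶜ - μ.restrict sᶜ) := by
    conv_lhs => rw [← Measure.restrict_add_restrict_compl (μ := ν) hs,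
      ← Measure.sub_add_cancel_of_le hle_sc]
    ac_rfl
  refine ⟨_, _, _, hμ, hν, ?_, ?_⟩
  · refine (ENNReal.add_right_inj (measure_ne_top (ν.restrict s + μ.restrict sᶜ) univ)).1 ?_
    rwa [← Measure.add_apply, ← Measure.add_apply, ← hμ, ← hν]
  · have hρ₁ : (μ.restrict s - ν.restrict s) univ = μ s - ν s := by
      rw [Measure.sub_apply .univ hle_s, Measure.restrict_apply_univ, Measure.restrict_apply_univ]
    calc (μ.restrict s - ν.restrict s).real univ = μ.real s - ν.real s := by
          rw [measureReal_def, hρ₁,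
            ENNReal.toReal_sub_of_le (hνμ s hs subset_rfl) (measure_ne_top μ s)]
          rfl
      _ ≤ tvDist μ ν := (le_abs_self _).trans (abs_sub_le_tvDist hs)

end TotalVariation

section Coupling

variable {α : Type*} [MeasurableSpace α]

/-- The maximal coupling of `c + ρ₁` and `c + ρ₂`: the common part `c` stays on the diagonal, and
the excess parts, of equal mass, are coupled independently. -/
noncomputable def overlapCoupling (c ρ₁ ρ₂ : Measure α) : Measure (α × α) :=
  c.map Function.diag + (ρ₁ univ)⁻¹ • ρ₁.prod ρ₂

lemma inv_measure_univ_mul_smul (ρ : Measure α) [IsFiniteMeasure ρ] :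
    ((ρ univ)⁻¹ * ρ univ) • ρ = ρ := by
  rcases eq_zero_or_neZero ρ with rfl | _
  · simp
  · rw [ENNReal.inv_mul_cancel (NeZero.ne _) (measure_ne_top ρ univ), one_smul]

variable {c ρ₁ ρ₂ : Measure α}

lemma map_fst_overlapCoupling [IsFiniteMeasure ρ₁] [IsFiniteMeasure ρ₂] (h : ρ₁ univ = ρ₂ univ) :
    (overlapCoupling c ρ₁ ρ₂).map Prod.fst = c + ρ₁ := by
  rw [overlapCoupling, Measure.map_add _ _ measurable_fst,
    Measure.map_map measurable_fst measurable_diag, Measure.map_smul, Measure.map_fst_prod,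
    smul_smul, ← h, inv_measure_univ_mul_smul]
  exact congrArg (· + ρ₁) Measure.map_id

lemma map_snd_overlapCoupling [IsFiniteMeasure ρ₂] (h : ρ₁ univ = ρ₂ univ) :
    (overlapCoupling c ρ₁ ρ₂).map Prod.snd = c + ρ₂ := by
  rw [overlapCoupling, Measure.map_add _ _ measurable_snd,
    Measure.map_map measurable_snd measurable_diag, Measure.map_smul, Measure.map_snd_prod,
    smul_smul, h, inv_measure_univ_mul_smul]
  exact congrArg (· + ρ₂) Measure.map_id

lemma integral_overlapCoupling {f : α × α → ℝ} (hf : Measurable f) (hf_diag : ∀ x, f (x, x) = 0)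
    (hint : Integrable f (ρ₁.prod ρ₂)) :
    ∫ p, f p ∂overlapCoupling c ρ₁ ρ₂ = (ρ₁.real univ)⁻¹ * ∫ p, f p ∂ρ₁.prod ρ₂ := by
  have hf_comp : f ∘ Function.diag = 0 := funext hf_diag
  have hint_diag : Integrable f (c.map Function.diag) := by
    rw [integrable_map_measure hf.aestronglyMeasurable measurable_diag.aemeasurable, hf_comp]
    exact integrable_zero _ _ _
  have h_diag : ∫ p, f p ∂c.map Function.diag = 0 := by
    rw [integral_map measurable_diag.aemeasurable hf.aestronglyMeasurable]
    simp [hf_diag]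
  rcases eq_zero_or_neZero ρ₁ with rfl | _
  · simp [overlapCoupling, h_diag]
  · have hint_smul := hint.smul_measure (c := (ρ₁ univ)⁻¹) (by simp [NeZero.ne ρ₁])
    rw [overlapCoupling, integral_add_measure hint_diag hint_smul, h_diag, integral_smul_measure,
      smul_eq_mul, ENNReal.toReal_inv, zero_add]
    rfl

end Coupling

lemma norm_sub_sq_le {E : Type*} [SeminormedAddCommGroup E] (u v : E) :
    ‖u - v‖ ^ 2 ≤ 2 * ‖u‖ ^ 2 + 2 * ‖v‖ ^ 2 := by
  have := pow_le_pow_left₀ (norm_nonneg _) (norm_sub_le u v) 2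
  linarith [add_sq_le (a := ‖u‖) (b := ‖v‖)]

section SquaredCost

variable {E : Type*} [NormedAddCommGroup E] [MeasurableSpace E] [OpensMeasurableSpace E]

lemma integral_norm_sub_sq_overlapCoupling_le [MeasurableSub₂ E] {c ρ₁ ρ₂ : Measure E}
    [IsFiniteMeasure ρ₁] [IsFiniteMeasure ρ₂] (h : ρ₁ univ = ρ₂ univ)
    (h₁ : Integrable (fun u => ‖u‖ ^ 2) ρ₁) (h₂ : Integrable (fun v => ‖v‖ ^ 2) ρ₂) :
    ∫ p, ‖p.1 - p.2‖ ^ 2 ∂overlapCoupling c ρ₁ ρ₂ ≤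
      2 * ∫ u, ‖u‖ ^ 2 ∂ρ₁ + 2 * ∫ v, ‖v‖ ^ 2 ∂ρ₂ := by
  set β := ρ₁.real univ
  have hβ : ρ₂.real univ = β := by simp only [β, measureReal_def, h]
  have hcost : Measurable fun p : E × E => ‖p.1 - p.2‖ ^ 2 :=
    (measurable_fst.sub measurable_snd).norm.pow_const 2
  have hbound : Integrable (fun p : E × E => 2 * ‖p.1‖ ^ 2 + 2 * ‖p.2‖ ^ 2) (ρ₁.prod ρ₂) :=
    ((h₁.comp_fst ρ₂).const_mul 2).add ((h₂.comp_snd ρ₁).const_mul 2)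
  have hint : Integrable (fun p : E × E => ‖p.1 - p.2‖ ^ 2) (ρ₁.prod ρ₂) :=
    hbound.mono' hcost.aestronglyMeasurable <| ae_of_all _ fun p => by
      rw [Real.norm_of_nonneg (by positivity)]
      exact norm_sub_sq_le p.1 p.2
  calc ∫ p, ‖p.1 - p.2‖ ^ 2 ∂overlapCoupling c ρ₁ ρ₂
      = β⁻¹ * ∫ p, ‖p.1 - p.2‖ ^ 2 ∂ρ₁.prod ρ₂ :=
        integral_overlapCoupling hcost (fun x => by simp) hint
    _ ≤ β⁻¹ * ∫ p, (2 * ‖p.1‖ ^ 2 + 2 * ‖p.2‖ ^ 2) ∂ρ₁.prod ρ₂ :=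
        mul_le_mul_of_nonneg_left (integral_mono hint hbound fun p => norm_sub_sq_le p.1 p.2)
          (by positivity)
    _ = (β⁻¹ * β) * (2 * ∫ u, ‖u‖ ^ 2 ∂ρ₁ + 2 * ∫ v, ‖v‖ ^ 2 ∂ρ₂) := by
        rw [integral_add ((h₁.comp_fst ρ₂).const_mul 2) ((h₂.comp_snd ρ₁).const_mul 2),
          integral_const_mul, integral_const_mul, integral_fun_fst (fun u => ‖u‖ ^ 2),
          integral_fun_snd (fun v => ‖v‖ ^ 2), hβ, smul_eq_mul, smul_eq_mul]
        ring
    _ ≤ 2 * ∫ u, ‖u‖ ^ 2 ∂ρ₁ + 2 * ∫ v, ‖v‖ ^ 2 ∂ρ₂ :=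
        mul_le_of_le_one_left (by positivity) inv_mul_le_one

lemma integral_norm_sq_le_of_le {ρ μ : Measure E} [IsFiniteMeasure ρ] (hρμ : ρ ≤ μ)
    (hμ : Integrable (fun u => ‖u‖ ^ 2) μ) (R : ℝ) :
    ∫ u, ‖u‖ ^ 2 ∂ρ ≤ R ^ 2 * ρ.real univ + ∫ u in {u : E | R < ‖u‖}, ‖u‖ ^ 2 ∂μ := by
  set A := {u : E | R < ‖u‖}
  have hA : MeasurableSet A := measurableSet_lt measurable_const measurable_norm
  have hρ : Integrable (fun u => ‖u‖ ^ 2) ρ := hμ.mono_measure hρμ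
  have h_inner : ∫ u in Aᶜ, ‖u‖ ^ 2 ∂ρ ≤ R ^ 2 * ρ.real univ :=
    calc ∫ u in Aᶜ, ‖u‖ ^ 2 ∂ρ ≤ ∫ _ in Aᶜ, R ^ 2 ∂ρ :=
          setIntegral_mono_on hρ.integrableOn (integrable_const _) hA.compl fun u hu =>
            pow_le_pow_left₀ (norm_nonneg u) (not_lt.1 hu) 2
      _ = R ^ 2 * ρ.real Aᶜ := by rw [setIntegral_const, smul_eq_mul, mul_comm]
      _ ≤ R ^ 2 * ρ.real univ :=
          mul_le_mul_of_nonneg_left (measureReal_mono (subset_univ _)) (sq_nonneg R)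
  have h_tail : ∫ u in A, ‖u‖ ^ 2 ∂ρ ≤ ∫ u in A, ‖u‖ ^ 2 ∂μ :=
    integral_mono_measure (Measure.restrict_mono le_rfl hρμ)
      (ae_of_all _ fun _ => by positivity) hμ.integrableOn
  rw [← integral_add_compl hA hρ]
  linarith

end SquaredCost

lemma W2sq_le_integral {d : ℕ} {μ ν : Measure (EuclideanSpace ℝ (Fin d))}
    (π : Measure (EuclideanSpace ℝ (Fin d) × EuclideanSpace ℝ (Fin d)))
    (h₁ : π.map Prod.fst = μ) (h₂ : π.map Prod.snd = ν) :
    W2sq μ ν ≤ ∫ p, ‖p.1 - p.2‖ ^ 2 ∂π := by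
  refine csInf_le ⟨0, ?_⟩ ⟨π, h₁, h₂, rfl⟩
  rintro _ ⟨π', -, -, rfl⟩
  exact integral_nonneg fun _ => by positivity

/-- Truncation bound: for probability measures with finite second moments,
`W₂(μ,ν)² ≤ 8R²‖μ-ν‖_TV + 4∫_{‖u‖>R}‖u‖²dμ + 4∫_{‖v‖>R}‖v‖²dν`. -/
theorem stmt13 {d : ℕ} (μ ν : Measure (EuclideanSpace ℝ (Fin d)))
    [IsProbabilityMeasure μ] [IsProbabilityMeasure ν]
    (hμ : Integrable (fun u => ‖u‖^2) μ)
    (hν : Integrable (fun v => ‖v‖^2) ν) :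
    ∀ R > (0:ℝ),
      W2sq μ ν ≤ 8 * R^2 * tvDist μ ν
        + 4 * ∫ u in {u : EuclideanSpace ℝ (Fin d) | R < ‖u‖}, ‖u‖^2 ∂μ
        + 4 * ∫ v in {v : EuclideanSpace ℝ (Fin d) | R < ‖v‖}, ‖v‖^2 ∂ν := by
  intro R _
  obtain ⟨c, ρ₁, ρ₂, hμc, hνc, hmass, hβ⟩ :=
    exists_eq_add_eq_add_real_le_tvDist (μ := μ) (ν := ν) (by simp)
  have hρ₁ : ρ₁ ≤ μ := hμc ▸ Measure.le_add_left le_rfl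
  have hρ₂ : ρ₂ ≤ ν := hνc ▸ Measure.le_add_left le_rfl
  have := isFiniteMeasure_of_le μ hρ₁
  have := isFiniteMeasure_of_le ν hρ₂
  have hβ₂ : ρ₂.real univ = ρ₁.real univ := by simp only [measureReal_def, hmass]
  have hμ_tail : 0 ≤ ∫ u in {u : EuclideanSpace ℝ (Fin d) | R < ‖u‖}, ‖u‖^2 ∂μ :=
    setIntegral_nonneg (measurableSet_lt measurable_const measurable_norm) fun _ _ => by positivity
  have hν_tail : 0 ≤ ∫ v in {v : EuclideanSpace ℝ (Fin d) | R < ‖v‖}, ‖v‖^2 ∂ν :=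
    setIntegral_nonneg (measurableSet_lt measurable_const measurable_norm) fun _ _ => by positivity
  have hR_tv : R ^ 2 * ρ₁.real univ ≤ R ^ 2 * tvDist μ ν := by gcongr
  calc W2sq μ ν ≤ ∫ p, ‖p.1 - p.2‖ ^ 2 ∂overlapCoupling c ρ₁ ρ₂ :=
        W2sq_le_integral _ (hμc ▸ map_fst_overlapCoupling hmass)
          (hνc ▸ map_snd_overlapCoupling hmass)
    _ ≤ 2 * ∫ u, ‖u‖ ^ 2 ∂ρ₁ + 2 * ∫ v, ‖v‖ ^ 2 ∂ρ₂ :=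
        integral_norm_sub_sq_overlapCoupling_le hmass (hμ.mono_measure hρ₁) (hν.mono_measure hρ₂)
    _ ≤ _ := by
        have := integral_norm_sq_le_of_le hρ₁ hμ R
        have := integral_norm_sq_le_of_le hρ₂ hν R
        nlinarith [sq_nonneg R, measureReal_nonneg (μ := ρ₁) (s := univ)]
end

section
/- Let μ, μ' be probability measures on a measurable space and ν a probability measure such that μ ≥ ε ν and μ' ≥ ε ν (setwise) for some ε ∈ (0,1). Then ‖μ - μ'‖_{TV} ≤ 1 - ε. -/
open MeasureTheory

lemma doeblin_aux {α : Type*} [MeasurableSpace α]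
    (μ μ' ν : Measure α)
    [IsProbabilityMeasure μ] [IsProbabilityMeasure μ'] [IsProbabilityMeasure ν]
    (ε : ℝ) (hε : ε ∈ Set.Ioo (0:ℝ) 1)
    (h : ∀ A : Set α, MeasurableSet A → ENNReal.ofReal ε * ν A ≤ μ A)
    (h' : ∀ A : Set α, MeasurableSet A → ENNReal.ofReal ε * ν A ≤ μ' A)
    (A : Set α) (hA : MeasurableSet A) :
    (μ A).toReal - (μ' A).toReal ≤ 1 - ε := by
  have key : ∀ (ρ : Measure α) [IsProbabilityMeasure ρ],
      (∀ B : Set α, MeasurableSet B → ENNReal.ofReal ε * ν B ≤ ρ B) →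
      ∀ B : Set α, MeasurableSet B → ε * (ν B).toReal ≤ (ρ B).toReal := by
    intro ρ _ hρ B hB
    have := ENNReal.toReal_mono (measure_ne_top ρ B) (hρ B hB)
    rwa [ENNReal.toReal_mul, ENNReal.toReal_ofReal hε.1.le] at this
  have h1 := key μ' h' A hA
  have h2 := key μ h Aᶜ hA.compl
  have hμc : (μ Aᶜ).toReal = 1 - (μ A).toReal := by
    rw [prob_compl_eq_one_sub hA, ENNReal.toReal_sub_of_le prob_le_one ENNReal.one_ne_top,
      ENNReal.toReal_one]
  have hνc : (ν Aᶜ).toReal = 1 - (ν A).toReal := by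
    rw [prob_compl_eq_one_sub hA, ENNReal.toReal_sub_of_le prob_le_one ENNReal.one_ne_top,
      ENNReal.toReal_one]
  rw [hμc, hνc] at h2
  linarith

/-- Doeblin minorization implies total-variation contraction: if `μ ≥ εν` and
`μ' ≥ εν` setwise, then `‖μ - μ'‖_TV ≤ 1 - ε`. -/
theorem stmt14 {α : Type*} [MeasurableSpace α]
    (μ μ' ν : Measure α)
    [IsProbabilityMeasure μ] [IsProbabilityMeasure μ'] [IsProbabilityMeasure ν]
    (ε : ℝ) (hε : ε ∈ Set.Ioo (0:ℝ) 1)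
    (h : ∀ A : Set α, MeasurableSet A → ENNReal.ofReal ε * ν A ≤ μ A)
    (h' : ∀ A : Set α, MeasurableSet A → ENNReal.ofReal ε * ν A ≤ μ' A) :
    tvDist μ μ' ≤ 1 - ε := by
  have : Nonempty {s : Set α // MeasurableSet s} := ⟨⟨∅, MeasurableSet.empty⟩⟩
  refine ciSup_le fun ⟨A, hA⟩ => ?_
  rw [abs_sub_le_iff]
  exact ⟨doeblin_aux μ μ' ν ε hε h h' A hA, doeblin_aux μ' μ ν ε hε h' h A hA⟩
end
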